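/- arXiv:2002.04594 — 3 statements merged into one kernel-verified Lean document; each statement's English description precedes it below -/
import Mathlib

section
/- Let 𝔤 be a nilpotent real Lie algebra which is not abelian. Then 𝔤 admits no ad-invariant inner product: for every inner product ⟨·,·⟩ on 𝔤 there exist x, y, z ∈ 𝔤 with ⟨⁅x, y⁆, z⟩ ≠ −⟨y, ⁅x, z⁆⟩. -/
/-!
If `B` is ad-invariant and `w` is central, then `B ⁅x, y⁆ w = -B y ⁅x, w⁆ = 0`, so `B` pairs the
derived algebra `⁅L, L⁆` trivially with the centre. In a nilpotent non-abelian Lie algebra the last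
nonzero term of the lower central series is central and lies in `⁅L, L⁆`; any nonzero `w` in it has
`B w w = 0`, so `B` is not positive definite.
-/

namespace LieModule

variable {R L M : Type*} [CommRing R] [LieRing L] [LieAlgebra R L]
  [AddCommGroup M] [Module R M] [LieRingModule L M] [LieModule R L M]

theorem apply_eq_zero_of_mem_lowerCentralSeries_one_of_mem_maxTrivSubmodule
    (B : M →ₗ[R] M →ₗ[R] R) (hB : ∀ (x : L) (m n : M), B ⁅x, m⁆ n = -(B m ⁅x, n⁆))
    {v w : M} (hv : v ∈ lowerCentralSeries R L M 1) (hw : w ∈ maxTrivSubmodule R L M) :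
    B v w = 0 := by
  suffices (lowerCentralSeries R L M 1 : Submodule R M) ≤ LinearMap.ker (B.flip w) from this hv
  rw [lowerCentralSeries_succ, lowerCentralSeries_zero,
    LieSubmodule.lieIdeal_oper_eq_linear_span', Submodule.span_le]
  rintro _ ⟨x, -, m, -, rfl⟩
  simp [hB x m w, (mem_maxTrivSubmodule R L M w).mp hw x]

theorem lowerCentralSeries_one_inf_maxTrivSubmodule_ne_bot [IsNilpotent L M]
    (h : ¬IsTrivial L M) : lowerCentralSeries R L M 1 ⊓ maxTrivSubmodule R L M ≠ ⊥ := by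
  have : Nontrivial M := by
    rw [← not_subsingleton_iff_nontrivial]
    exact fun _ ↦ h inferInstance
  have hlast := (LieSubmodule.nontrivial_iff_ne_bot R L _).mp
    (nontrivial_lowerCentralSeriesLast R L M)
  exact ne_bot_of_le_ne_bot hlast
    (le_inf (lowerCentralSeriesLast_le_of_not_isTrivial R L M h)
      (lowerCentralSeriesLast_le_max_triv R L M))

end LieModule

theorem nilpotent_nonabelian_no_adInvariant_inner_product_general
    {L : Type*} [LieRing L] [LieAlgebra ℝ L]
    [LieRing.IsNilpotent L]
    (hnab : ∃ x y : L, ⁅x, y⁆ ≠ 0)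
    (B : L →ₗ[ℝ] L →ₗ[ℝ] ℝ)
    (hpos : ∀ x : L, x ≠ 0 → 0 < B x x) :
    ∃ x y z : L, B ⁅x, y⁆ z ≠ -(B y ⁅x, z⁆) := by
  by_contra! hinv
  have hnontriv : ¬LieModule.IsTrivial L L := by
    obtain ⟨x, y, hxy⟩ := hnab
    exact fun _ ↦ hxy (trivial_lie_zero L L x y)
  have hmeet := LieModule.lowerCentralSeries_one_inf_maxTrivSubmodule_ne_bot (R := ℝ) hnontriv
  rw [Ne, LieSubmodule.eq_bot_iff] at hmeet
  push Not at hmeet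
  obtain ⟨w, ⟨hw₁, hw₂⟩, hw⟩ := hmeet
  exact (hpos w hw).ne'
    (LieModule.apply_eq_zero_of_mem_lowerCentralSeries_one_of_mem_maxTrivSubmodule B hinv hw₁ hw₂)

/-- (Wolf) A nilpotent real Lie algebra which is not abelian admits no ad-invariant inner
product: for every inner product `⟨·,·⟩` (a symmetric positive-definite bilinear form `B`)
there exist `x, y, z` with `⟨⁅x, y⁆, z⟩ ≠ −⟨y, ⁅x, z⁆⟩`. -/
theorem nilpotent_nonabelian_no_adInvariant_inner_product
    {L : Type*} [LieRing L] [LieAlgebra ℝ L]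
    [LieRing.IsNilpotent L]
    (hnab : ∃ x y : L, ⁅x, y⁆ ≠ 0)
    (B : L →ₗ[ℝ] L →ₗ[ℝ] ℝ)
    (hsymm : ∀ x y : L, B x y = B y x)
    (hpos : ∀ x : L, x ≠ 0 → 0 < B x x) :
    ∃ x y z : L, B ⁅x, y⁆ z ≠ -(B y ⁅x, z⁆) :=
  nilpotent_nonabelian_no_adInvariant_inner_product_general hnab B hpos
end

section
/- Let 𝔤 be a finite-dimensional real Lie algebra with an inner product and an orthonormal basis (f_k)_{k ∈ ι} indexed by a finite type ι with a distinguished element 0. Define the structure constants α_{ab}^c = ⟨⁅f_a, f_b⁆, f_c⟩ and Milnor's expression A_{ab}^k = (1/2)·α_{ab}^k·(−α_{ab}^k + α_{bk}^a + α_{ka}^b) − (1/4)·(α_{ab}^k − α_{bk}^a + α_{ka}^b)·(α_{ab}^k + α_{bk}^a − α_{ka}^b) − α_{ka}^a·α_{kb}^b. Suppose there is a function ψ : ι → ℝ such that ⁅f₀, f_k⁆ = ψ(k) · f_k for every k ≠ 0, and suppose ⟨⁅f_a, f_b⁆, f₀⟩ = 0 for all a, b ≠ 0. Then for every m ≠ 0,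 the sum over all k ∈ ι of A_{0m}^k equals −ψ(m)². -/
/-- The structure constants `α_{ab}^c = ⟨⁅f_a, f_b⁆, f_c⟩` of a Lie algebra relative to a
bilinear form `B` and a family of vectors `f`. -/
noncomputable def structConst {L : Type*} [LieRing L] [LieAlgebra ℝ L] {ι : Type*}
    (B : L →ₗ[ℝ] L →ₗ[ℝ] ℝ) (f : ι → L) (a b c : ι) : ℝ :=
  B ⁅f a, f b⁆ (f c)

/-- Milnor's curvature expression
`A_{ab}^k = ½ α_{ab}^k (−α_{ab}^k + α_{bk}^a + α_{ka}^b)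
  − ¼ (α_{ab}^k − α_{bk}^a + α_{ka}^b)(α_{ab}^k + α_{bk}^a − α_{ka}^b) − α_{ka}^a α_{kb}^b`. -/
noncomputable def milnorA {L : Type*} [LieRing L] [LieAlgebra ℝ L] {ι : Type*}
    (B : L →ₗ[ℝ] L →ₗ[ℝ] ℝ) (f : ι → L) (a b k : ι) : ℝ :=
  (1 / 2) * structConst B f a b k *
      (-(structConst B f a b k) + structConst B f b k a + structConst B f k a b)
    - (1 / 4) * (structConst B f a b k - structConst B f b k a + structConst B f k a b) *
        (structConst B f a b k + structConst B f b k a - structConst B f k a b)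
    - structConst B f k a a * structConst B f k b b

/-! On the vertical plane spanned by `f₀` and `f_m`, the only structure constants entering
Milnor's expression that survive are `α_{0m}^m = ψ(m)` and `α_{m0}^m = -ψ(m)`: orthonormality
makes `ad f₀` diagonal, and the horizontal brackets have no `f₀`-component. Hence only the
term `k = m` of the sum is nonzero, and there it equals `½ ψ (-ψ - ψ) = -ψ²`. -/

theorem milnorA_eq_neg_sq {L : Type*} [LieRing L] [LieAlgebra ℝ L] {ι : Type*}
    (B : L →ₗ[ℝ] L →ₗ[ℝ] ℝ) (f : ι → L) {a b k : ι} {x : ℝ}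
    (hab : structConst B f a b k = x) (hbk : structConst B f b k a = 0)
    (hka : structConst B f k a b = -x) (hkaa : structConst B f k a a = 0) :
    milnorA B f a b k = -x ^ 2 := by
  simp only [milnorA, hab, hbk, hka, hkaa]
  ring

section Orthonormal

variable {L : Type*} [LieRing L] [LieAlgebra ℝ L] {ι : Type*}

theorem structConst_swap (B : L →ₗ[ℝ] L →ₗ[ℝ] ℝ) (f : ι → L) (a b k : ι) :
    structConst B f b a k = -structConst B f a b k := by
  rw [structConst, structConst, ← lie_skew (f a) (f b), map_neg, LinearMap.neg_apply, neg_neg]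

theorem structConst_self (B : L →ₗ[ℝ] L →ₗ[ℝ] ℝ) (f : ι → L) (a k : ι) :
    structConst B f a a k = 0 := by
  simp only [structConst, lie_self, map_zero, LinearMap.zero_apply]

theorem structConst_of_lie_eq_smul [DecidableEq ι] {B : L →ₗ[ℝ] L →ₗ[ℝ] ℝ} {f : ι → L}
    (horth : ∀ a b : ι, B (f a) (f b) = if a = b then 1 else 0) {a b : ι} {c : ℝ}
    (h : ⁅f a, f b⁆ = c • f b) (k : ι) :
    structConst B f a b k = if b = k then c else 0 := by
  simp only [structConst, h, map_smul, LinearMap.smul_apply, smul_eq_mul, horth, mul_ite,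
    mul_one, mul_zero]

variable [DecidableEq ι] [Zero ι] {B : L →ₗ[ℝ] L →ₗ[ℝ] ℝ} {f : ι → L} {ψ : ι → ℝ}

theorem structConst_zero_left (horth : ∀ a b : ι, B (f a) (f b) = if a = b then 1 else 0)
    (heig : ∀ k : ι, k ≠ 0 → ⁅f 0, f k⁆ = ψ k • f k) {a b : ι} (hab : a ≠ 0 ∨ b ≠ 0) :
    structConst B f 0 a b = if a = b then ψ a else 0 := by
  by_cases ha : a = 0
  · subst ha
    have hb : b ≠ 0 := by simpa using hab
    rw [structConst_self, if_neg hb.symm]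
  · exact structConst_of_lie_eq_smul horth (heig a ha) b

theorem structConst_zero_left_zero
    (horth : ∀ a b : ι, B (f a) (f b) = if a = b then 1 else 0)
    (heig : ∀ k : ι, k ≠ 0 → ⁅f 0, f k⁆ = ψ k • f k) (a : ι) :
    structConst B f 0 a 0 = 0 := by
  by_cases ha : a = 0
  · rw [ha, structConst_self]
  · rw [structConst_zero_left horth heig (Or.inl ha), if_neg ha]

theorem structConst_horizontal (horth : ∀ a b : ι, B (f a) (f b) = if a = b then 1 else 0)
    (heig : ∀ k : ι, k ≠ 0 → ⁅f 0, f k⁆ = ψ k • f k)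
    (hhoriz : ∀ a b : ι, a ≠ 0 → b ≠ 0 → B ⁅f a, f b⁆ (f 0) = 0) {a : ι} (ha : a ≠ 0)
    (b : ι) : structConst B f a b 0 = 0 := by
  by_cases hb : b = 0
  · rw [hb, structConst_swap, structConst_zero_left_zero horth heig, neg_zero]
  · exact hhoriz a b ha hb

theorem milnorA_vertical (horth : ∀ a b : ι, B (f a) (f b) = if a = b then 1 else 0)
    (heig : ∀ k : ι, k ≠ 0 → ⁅f 0, f k⁆ = ψ k • f k)
    (hhoriz : ∀ a b : ι, a ≠ 0 → b ≠ 0 → B ⁅f a, f b⁆ (f 0) = 0) {m : ι} (hm : m ≠ 0)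
    (k : ι) : milnorA B f 0 m k = if m = k then -ψ m ^ 2 else 0 := by
  have hk0m : structConst B f k 0 m = -if m = k then ψ m else 0 := by
    rw [structConst_swap, structConst_zero_left horth heig (Or.inr hm)]
    by_cases hmk : m = k
    · subst hmk; simp
    · simp [hmk, Ne.symm hmk]
  rw [milnorA_eq_neg_sq B f (structConst_zero_left horth heig (Or.inl hm))
    (structConst_horizontal horth heig hhoriz hm k) hk0m]
  · split_ifs <;> simp
  · rw [structConst_swap, structConst_zero_left_zero horth heig, neg_zero]

end Orthonormal

theorem milnor_vertical_plane_curvature_general {L : Type*} [LieRing L] [LieAlgebra ℝ L]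
    {ι : Type*} [Fintype ι] [DecidableEq ι] [Zero ι]
    (B : L →ₗ[ℝ] L →ₗ[ℝ] ℝ)
    (f : Module.Basis ι ℝ L)
    (horth : ∀ a b : ι, B (f a) (f b) = if a = b then 1 else 0)
    (ψ : ι → ℝ)
    (heig : ∀ k : ι, k ≠ 0 → ⁅f 0, f k⁆ = ψ k • f k)
    (hhoriz : ∀ a b : ι, a ≠ 0 → b ≠ 0 → B ⁅f a, f b⁆ (f 0) = 0) :
    ∀ m : ι, m ≠ 0 → ∑ k : ι, milnorA B (⇑f) 0 m k = -(ψ m) ^ 2 := by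
  intro m hm
  rw [Fintype.sum_congr _ _ (milnorA_vertical horth heig hhoriz hm)]
  exact Fintype.sum_ite_eq m fun _ => -ψ m ^ 2

/-- Milnor's formula applied to vertical planes: if `f` is an orthonormal basis with
distinguished element `0`, `⁅f₀, f_k⁆ = ψ(k) f_k` for `k ≠ 0`, and `⟨⁅f_a, f_b⁆, f₀⟩ = 0`
for `a, b ≠ 0`, then for every `m ≠ 0` the sum `Σ_k A_{0m}^k` equals `−ψ(m)²` (the
sectional curvature of the vertical plane spanned by `f₀` and `f_m`). -/
theorem milnor_vertical_plane_curvature {L : Type*} [LieRing L] [LieAlgebra ℝ L]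
    {ι : Type*} [Fintype ι] [DecidableEq ι] [Zero ι]
    (B : L →ₗ[ℝ] L →ₗ[ℝ] ℝ)
    (hsymm : ∀ x y : L, B x y = B y x)
    (f : Module.Basis ι ℝ L)
    (horth : ∀ a b : ι, B (f a) (f b) = if a = b then 1 else 0)
    (ψ : ι → ℝ)
    (heig : ∀ k : ι, k ≠ 0 → ⁅f 0, f k⁆ = ψ k • f k)
    (hhoriz : ∀ a b : ι, a ≠ 0 → b ≠ 0 → B ⁅f a, f b⁆ (f 0) = 0) :
    ∀ m : ι, m ≠ 0 → ∑ k : ι, milnorA B (⇑f) 0 m k = -(ψ m) ^ 2 :=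
  milnor_vertical_plane_curvature_general B f horth ψ heig hhoriz
end

section
/- Let 𝔤 be a finite-dimensional real Lie algebra with an inner product and an orthonormal basis (f_k)_{k ∈ ι}, with structure constants α_{ab}^c = ⟨⁅f_a, f_b⁆, f_c⟩ and Milnor expression A_{ab}^k = (1/2)·α_{ab}^k·(−α_{ab}^k + α_{bk}^a + α_{ka}^b) − (1/4)·(α_{ab}^k − α_{bk}^a + α_{ka}^b)·(α_{ab}^k + α_{bk}^a − α_{ka}^b) − α_{ka}^a·α_{kb}^b. Suppose there is a layer function ψ : ι → ℕ with ψ(k) ≥ 1 for all k, such that α_{ab}^c = 0 whenever ψ(c) ≠ ψ(a) + ψ(b). Then for any distinct a, b with ψ(a) = ψ(b) = 1, the sum over all k ∈ ι of A_{ab}^k equals −(3/4)·‖⁅f_a, f_b⁆‖². -/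
namespace Module.Basis

variable {ι R M : Type*} [CommSemiring R] [AddCommMonoid M] [Module R M] [DecidableEq ι]
  {B : M →ₗ[R] M →ₗ[R] R} {f : Basis ι R M}

theorem bilin_apply_eq_repr (horth : ∀ i j, B (f i) (f j) = if i = j then 1 else 0)
    (x : M) (j : ι) : B x (f j) = f.repr x j := by
  have : B.flip (f j) = (Finsupp.lapply j).comp f.repr.toLinearMap :=
    f.ext fun i => by simp [horth, Finsupp.single_apply]
  exact LinearMap.congr_fun this x

theorem bilin_self_eq_sum_sq [Fintype ι]
    (horth : ∀ i j, B (f i) (f j) = if i = j then 1 else 0) (x : M) :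
    B x x = ∑ k, B x (f k) ^ 2 := by
  calc B x x = B x (∑ k, f.repr x k • f k) := by rw [f.sum_repr]
    _ = ∑ k, B x (f k) ^ 2 := by
      simp only [map_sum, map_smul, smul_eq_mul, ← bilin_apply_eq_repr horth, sq]

end Module.Basis

section StructConst

variable {L : Type*} [LieRing L] [LieAlgebra ℝ L] {ι : Type*}

theorem milnorA_eq_of_structConst_eq_zero {B : L →ₗ[ℝ] L →ₗ[ℝ] ℝ} {f : ι → L} {a b k : ι}
    (hbka : structConst B f b k a = 0) (hkab : structConst B f k a b = 0)
    (hkaa : structConst B f k a a = 0) :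
    milnorA B f a b k = -(3 / 4) * structConst B f a b k ^ 2 := by
  simp only [milnorA, hbka, hkab, hkaa]
  ring

theorem structConst_eq_zero_of_layer_eq_one {B : L →ₗ[ℝ] L →ₗ[ℝ] ℝ} {f : ι → L} {ψ : ι → ℕ}
    (hψ : ∀ k, 1 ≤ ψ k) (hlayer : ∀ a b c, ψ c ≠ ψ a + ψ b → structConst B f a b c = 0)
    (a b : ι) {c : ι} (hc : ψ c = 1) : structConst B f a b c = 0 :=
  hlayer a b c (by have := hψ a; have := hψ b; omega)

end StructConst

theorem milnor_horizontal_plane_curvature_general {L : Type*} [LieRing L] [LieAlgebra ℝ L]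
    {ι : Type*} [Fintype ι] [DecidableEq ι]
    (B : L →ₗ[ℝ] L →ₗ[ℝ] ℝ)
    (f : Module.Basis ι ℝ L)
    (horth : ∀ a b : ι, B (f a) (f b) = if a = b then 1 else 0)
    (ψ : ι → ℕ) (hψ : ∀ k : ι, 1 ≤ ψ k)
    (hlayer : ∀ a b c : ι, ψ c ≠ ψ a + ψ b → structConst B (⇑f) a b c = 0) :
    ∀ a b : ι, a ≠ b → ψ a = 1 → ψ b = 1 →
      ∑ k : ι, milnorA B (⇑f) a b k = -(3 / 4) * B ⁅f a, f b⁆ ⁅f a, f b⁆ := by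
  intro a b _ ha hb
  have hvanish := structConst_eq_zero_of_layer_eq_one hψ hlayer
  have hA (k : ι) : milnorA B f a b k = -(3 / 4) * structConst B f a b k ^ 2 :=
    milnorA_eq_of_structConst_eq_zero (hvanish b k ha) (hvanish k a hb) (hvanish k a ha)
  rw [Finset.sum_congr rfl fun k _ => hA k, ← Finset.mul_sum,
    f.bilin_self_eq_sum_sq horth]
  rfl

/-- Milnor's formula applied to horizontal-layer planes: if `f` is an orthonormal basis
carrying a layer function `ψ ≥ 1` with `α_{ab}^c = 0` whenever `ψ(c) ≠ ψ(a) + ψ(b)`, then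
for distinct `a, b` in the first layer (`ψ(a) = ψ(b) = 1`) the sum `Σ_k A_{ab}^k` equals
`−(3/4)·‖⁅f_a, f_b⁆‖²` (the nilpotent sectional curvature of the plane `⟨f_a, f_b⟩`). -/
theorem milnor_horizontal_plane_curvature {L : Type*} [LieRing L] [LieAlgebra ℝ L]
    {ι : Type*} [Fintype ι] [DecidableEq ι]
    (B : L →ₗ[ℝ] L →ₗ[ℝ] ℝ)
    (hsymm : ∀ x y : L, B x y = B y x)
    (f : Module.Basis ι ℝ L)
    (horth : ∀ a b : ι, B (f a) (f b) = if a = b then 1 else 0)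
    (ψ : ι → ℕ) (hψ : ∀ k : ι, 1 ≤ ψ k)
    (hlayer : ∀ a b c : ι, ψ c ≠ ψ a + ψ b → structConst B (⇑f) a b c = 0) :
    ∀ a b : ι, a ≠ b → ψ a = 1 → ψ b = 1 →
      ∑ k : ι, milnorA B (⇑f) a b k = -(3 / 4) * B ⁅f a, f b⁆ ⁅f a, f b⁆ :=
  milnor_horizontal_plane_curvature_general B f horth ψ hψ hlayer
end
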